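/- Let λ∈ℂ∖{0} and a,b,η,θ∈ℂ with (η,θ)≠(0,0). Then for all μ₁,μ₂∈ℂ there is no nonzero vector w in the 𝔤-module Θ(λ,a,b)⊗L(η,θ) satisfying e·w=μ₁w and ē·w=μ₂w. Consequently, Θ(λ,a,b)⊗L(η,θ) is not isomorphic, as a 𝔤-module, to any nonzero quotient of the cyclic 𝔤-module U(𝔤)/(U(𝔤)(e−μ₁)+U(𝔤)(ē−μ₂)) (i.e., to any Whittaker module). -/

import Mathlib

open scoped TensorProduct

noncomputable section

/-- The polynomial ring `ℂ[h, h̄]`, with `X 0 = h` and `X 1 = h̄`. -/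
abbrev P2 : Type := MvPolynomial (Fin 2) ℂ

namespace Tk

/-- The variable `h`. -/
def hh : P2 := MvPolynomial.X 0

/-- The variable `h̄`. -/
def hbar : P2 := MvPolynomial.X 1

/-- Constant polynomials. -/
def Cc (c : ℂ) : P2 := MvPolynomial.C c

/-- Substitution `h ↦ h + c`, i.e. `sh c γ = γ(h + c, h̄)`. -/
def sh (c : ℂ) (γ : P2) : P2 := MvPolynomial.aeval ![hh + Cc c, hbar] γ

/-- The partial derivative `∂/∂h̄`. -/
def pd (γ : P2) : P2 := MvPolynomial.pderiv (1 : Fin 2) γ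

/-- The embedding `ℂ[h̄] → ℂ[h,h̄]`, `q(X) ↦ q(h̄)`. -/
def emb (q : Polynomial ℂ) : P2 := Polynomial.aeval hbar q

/-- The data exhibiting a complex Lie algebra `g` as the Takiff Lie algebra of `sl₂`:
a basis `e, f, h, ē, f̄, h̄` (denoted `E F H E' F' H'`) subject to the Takiff bracket
relations. -/
structure TakiffData (g : Type) [LieRing g] [LieAlgebra ℂ g] where
  E : g
  F : g
  H : g
  E' : g
  F' : g
  H' : g
  bas : Module.Basis (Fin 6) ℂ g
  hbas : ⇑bas = ![E, F, H, E', F', H']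
  rEF : ⁅E, F⁆ = H
  rHE : ⁅H, E⁆ = (2 : ℂ) • E
  rHF : ⁅H, F⁆ = (-2 : ℂ) • F
  rE'F : ⁅E', F⁆ = H'
  rEF' : ⁅E, F'⁆ = H'
  rHE' : ⁅H, E'⁆ = (2 : ℂ) • E'
  rH'E : ⁅H', E⁆ = (2 : ℂ) • E'
  rHF' : ⁅H, F'⁆ = (-2 : ℂ) • F'
  rH'F : ⁅H', F⁆ = (-2 : ℂ) • F'
  rHH' : ⁅H, H'⁆ = 0
  rEE' : ⁅E, E'⁆ = 0
  rFF' : ⁅F, F'⁆ = 0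
  rE'F' : ⁅E', F'⁆ = 0
  rE'H' : ⁅E', H'⁆ = 0
  rF'H' : ⁅F', H'⁆ = 0

variable {g : Type} [LieRing g] [LieAlgebra ℂ g]

/-- The Lie module structure on `ℂ[h,h̄]` is that of `Γ(λ, a, b)`. -/
def GammaAct (T : TakiffData g) (l a b : ℂ) [LieRingModule g P2] : Prop :=
  (∀ γ : P2, ⁅T.E, γ⁆ = Cc (-2 * l) * pd (sh (-2) γ)) ∧
  (∀ γ : P2, ⁅T.E', γ⁆ = Cc l * sh (-2) γ) ∧
  (∀ γ : P2, ⁅T.F, γ⁆ =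
      -(Cc (1 / (2 * l)) * ((hh + Cc 2) * hbar + Cc b) * sh 2 γ)
        - Cc (1 / (2 * l)) * (hbar ^ 2 + Cc a) * pd (sh 2 γ)) ∧
  (∀ γ : P2, ⁅T.F', γ⁆ = -(Cc (1 / (4 * l)) * (hbar ^ 2 + Cc a) * sh 2 γ)) ∧
  (∀ γ : P2, ⁅T.H, γ⁆ = hh * γ) ∧
  (∀ γ : P2, ⁅T.H', γ⁆ = hbar * γ)

/-- The Lie module structure on `ℂ[h,h̄]` is that of `Θ(λ, a, b)`. -/
def ThetaAct (T : TakiffData g) (l a b : ℂ) [LieRingModule g P2] : Prop :=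
  (∀ γ : P2, ⁅T.F, γ⁆ = Cc (2 * l) * pd (sh 2 γ)) ∧
  (∀ γ : P2, ⁅T.F', γ⁆ = Cc l * sh 2 γ) ∧
  (∀ γ : P2, ⁅T.E', γ⁆ = -(Cc (1 / (4 * l)) * (hbar ^ 2 + Cc a) * sh (-2) γ)) ∧
  (∀ γ : P2, ⁅T.E, γ⁆ =
      -(Cc (1 / (2 * l)) * ((hh - Cc 2) * hbar + Cc b) * sh (-2) γ)
        + Cc (1 / (2 * l)) * (hbar ^ 2 + Cc a) * pd (sh (-2) γ)) ∧
  (∀ γ : P2, ⁅T.H, γ⁆ = hh * γ) ∧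
  (∀ γ : P2, ⁅T.H', γ⁆ = hbar * γ)

/-- The Lie module structure on `ℂ[h,h̄]` is that of `Ω(λ, a, β(h̄))` (with auxiliary
polynomial `α(h̄)`). -/
def OmegaAct (T : TakiffData g) (l a : ℂ) (α β : Polynomial ℂ) [LieRingModule g P2] : Prop :=
  (∀ γ : P2, ⁅T.E, γ⁆ =
      (Cc (l / 2) * hh + emb α) * sh (-2) γ - Cc l * (hbar + Cc a) * pd (sh (-2) γ)) ∧
  (∀ γ : P2, ⁅T.F, γ⁆ =
      -((Cc (1 / (2 * l)) * hh - emb β) * sh 2 γ) - Cc (1 / l) * (hbar - Cc a) * pd (sh 2 γ)) ∧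
  (∀ γ : P2, ⁅T.E', γ⁆ = Cc (l / 2) * (hbar + Cc a) * sh (-2) γ) ∧
  (∀ γ : P2, ⁅T.F', γ⁆ = -(Cc (1 / (2 * l)) * (hbar - Cc a) * sh 2 γ)) ∧
  (∀ γ : P2, ⁅T.H, γ⁆ = hh * γ) ∧
  (∀ γ : P2, ⁅T.H', γ⁆ = hbar * γ)

/-- `v` is a highest weight vector of highest weight `(η, θ)`. -/
def IsHW (T : TakiffData g) (η θ : ℂ) {L : Type} [AddCommGroup L] [Module ℂ L]
    [LieRingModule g L] (v : L) : Prop :=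
  v ≠ 0 ∧ ⁅T.E, v⁆ = 0 ∧ ⁅T.E', v⁆ = 0 ∧ ⁅T.H, v⁆ = θ • v ∧ ⁅T.H', v⁆ = η • v

/-- `M`, with distinguished vector `vb`, is the Verma module `L̄(η, θ)`: `vb` is a
highest weight vector of weight `(η, θ)` generating `M`, and `M` enjoys the corresponding
universal property. -/
def IsVerma (T : TakiffData g) (η θ : ℂ) {M : Type} [AddCommGroup M] [Module ℂ M]
    [LieRingModule g M] [LieModule ℂ g M] (vb : M) : Prop :=
  ⁅T.E, vb⁆ = 0 ∧ ⁅T.E', vb⁆ = 0 ∧ ⁅T.H, vb⁆ = θ • vb ∧ ⁅T.H', vb⁆ = η • vb ∧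
  LieSubmodule.lieSpan ℂ g {vb} = ⊤ ∧
  ∀ (N : Type) [AddCommGroup N] [Module ℂ N] [LieRingModule g N] [LieModule ℂ g N]
    (w : N), ⁅T.E, w⁆ = 0 → ⁅T.E', w⁆ = 0 → ⁅T.H, w⁆ = θ • w → ⁅T.H', w⁆ = η • w →
      ∃ φ : M →ₗ⁅ℂ,g⁆ N, φ vb = w

/-- `f^i • f̄^j • vb`. -/
def ff (T : TakiffData g) {M : Type} [AddCommGroup M] [Module ℂ M] [LieRingModule g M]
    (vb : M) (i j : ℕ) : M :=
  (fun z : M => ⁅T.F, z⁆)^[i] ((fun z : M => ⁅T.F', z⁆)^[j] vb)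

end Tk

namespace Tk

variable {g : Type} [LieRing g] [LieAlgebra ℂ g]

/-- The Lie module `V`, identified with `ℂ[h,h̄]` via the linear equivalence `ι`, is a copy of
`Γ(λ, a, b)`. -/
def GammaActOn (T : TakiffData g) (l a b : ℂ) {V : Type} [AddCommGroup V] [Module ℂ V]
    [LieRingModule g V] (ι : V ≃ₗ[ℂ] P2) : Prop :=
  (∀ v : V, ι ⁅T.E, v⁆ = Cc (-2 * l) * pd (sh (-2) (ι v))) ∧
  (∀ v : V, ι ⁅T.E', v⁆ = Cc l * sh (-2) (ι v)) ∧
  (∀ v : V, ι ⁅T.F, v⁆ =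
      -(Cc (1 / (2 * l)) * ((hh + Cc 2) * hbar + Cc b) * sh 2 (ι v))
        - Cc (1 / (2 * l)) * (hbar ^ 2 + Cc a) * pd (sh 2 (ι v))) ∧
  (∀ v : V, ι ⁅T.F', v⁆ = -(Cc (1 / (4 * l)) * (hbar ^ 2 + Cc a) * sh 2 (ι v))) ∧
  (∀ v : V, ι ⁅T.H, v⁆ = hh * ι v) ∧
  (∀ v : V, ι ⁅T.H', v⁆ = hbar * ι v)

/-- The Lie module `V`, identified with `ℂ[h,h̄]` via the linear equivalence `ι`, is a copy of
`Θ(λ, a, b)`. -/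
def ThetaActOn (T : TakiffData g) (l a b : ℂ) {V : Type} [AddCommGroup V] [Module ℂ V]
    [LieRingModule g V] (ι : V ≃ₗ[ℂ] P2) : Prop :=
  (∀ v : V, ι ⁅T.F, v⁆ = Cc (2 * l) * pd (sh 2 (ι v))) ∧
  (∀ v : V, ι ⁅T.F', v⁆ = Cc l * sh 2 (ι v)) ∧
  (∀ v : V, ι ⁅T.E', v⁆ = -(Cc (1 / (4 * l)) * (hbar ^ 2 + Cc a) * sh (-2) (ι v))) ∧
  (∀ v : V, ι ⁅T.E, v⁆ =
      -(Cc (1 / (2 * l)) * ((hh - Cc 2) * hbar + Cc b) * sh (-2) (ι v))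
        + Cc (1 / (2 * l)) * (hbar ^ 2 + Cc a) * pd (sh (-2) (ι v))) ∧
  (∀ v : V, ι ⁅T.H, v⁆ = hh * ι v) ∧
  (∀ v : V, ι ⁅T.H', v⁆ = hbar * ι v)

/-- The Lie module `V`, identified with `ℂ[h,h̄]` via the linear equivalence `ι`, is a copy of
`Ω(λ, a, β(h̄))` (with auxiliary polynomial `α(h̄)`). -/
def OmegaActOn (T : TakiffData g) (l a : ℂ) (α β : Polynomial ℂ) {V : Type} [AddCommGroup V]
    [Module ℂ V] [LieRingModule g V] (ι : V ≃ₗ[ℂ] P2) : Prop :=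
  (∀ v : V, ι ⁅T.E, v⁆ =
      (Cc (l / 2) * hh + emb α) * sh (-2) (ι v) - Cc l * (hbar + Cc a) * pd (sh (-2) (ι v))) ∧
  (∀ v : V, ι ⁅T.F, v⁆ =
      -((Cc (1 / (2 * l)) * hh - emb β) * sh 2 (ι v))
        - Cc (1 / l) * (hbar - Cc a) * pd (sh 2 (ι v))) ∧
  (∀ v : V, ι ⁅T.E', v⁆ = Cc (l / 2) * (hbar + Cc a) * sh (-2) (ι v)) ∧
  (∀ v : V, ι ⁅T.F', v⁆ = -(Cc (1 / (2 * l)) * (hbar - Cc a) * sh 2 (ι v))) ∧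
  (∀ v : V, ι ⁅T.H, v⁆ = hh * ι v) ∧
  (∀ v : V, ι ⁅T.H', v⁆ = hbar * ι v)

end Tk


namespace Tk

open Polynomial

abbrev R1 : Type := Polynomial ℂ

def psi : P2 →ₐ[ℂ] Polynomial R1 :=
  MvPolynomial.aeval ![Polynomial.C Polynomial.X, Polynomial.X]

lemma psi_hh : psi hh = Polynomial.C Polynomial.X := by simp [psi, hh]

lemma psi_hbar : psi hbar = (Polynomial.X : Polynomial R1) := by simp [psi, hbar]

lemma psi_Cc (c : ℂ) : psi (Cc c) = Polynomial.C (Polynomial.C c) := by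
  simp [psi, Cc, Polynomial.algebraMap_apply]

def chi : Polynomial R1 →+* P2 :=
  Polynomial.eval₂RingHom (Polynomial.eval₂RingHom (MvPolynomial.C) hh) hbar

lemma chi_psi (γ : P2) : chi (psi γ) = γ := by
  have h : chi.comp (psi : P2 →ₐ[ℂ] Polynomial R1).toRingHom = RingHom.id P2 := by
    apply MvPolynomial.ringHom_ext
    · intro r
      simp [chi, psi, Polynomial.algebraMap_apply]
    · intro i
      fin_cases i <;> simp [chi, psi, hh, hbar]
  exact RingHom.congr_fun h γ

lemma psi_inj : Function.Injective psi := fun x y h => by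
  have := congrArg chi h; rwa [chi_psi, chi_psi] at this

def sigA : R1 →ₐ[ℂ] R1 := Polynomial.aeval (Polynomial.X + Polynomial.C (-2 : ℂ))
def sigA' : R1 →ₐ[ℂ] R1 := Polynomial.aeval (Polynomial.X + Polynomial.C (2 : ℂ))

lemma sigA'_sigA (x : R1) : sigA' (sigA x) = x := by
  have h : sigA'.comp sigA = AlgHom.id ℂ R1 := by
    apply Polynomial.algHom_ext
    simp [sigA, sigA']
  exact AlgHom.congr_fun h x

def sigL : R1 →ₗ[ℂ] R1 := sigA.toLinearMap
def sigL' : R1 →ₗ[ℂ] R1 := sigA'.toLinearMap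

lemma psi_sh (γ : P2) : psi (sh (-2) γ) = (psi γ).map sigA.toRingHom := by
  have h : psi.comp (MvPolynomial.aeval ![hh + Cc (-2 : ℂ), hbar])
      = (Polynomial.mapAlgHom sigA).comp psi := by
    apply MvPolynomial.algHom_ext
    intro i
    fin_cases i <;>
      simp [psi, hh, hbar, Cc, sigA, Polynomial.algebraMap_apply, Polynomial.mapAlgHom]
  exact AlgHom.congr_fun h γ

def kap (n : ℕ) : P2 →ₗ[ℂ] R1 where
  toFun γ := (psi γ).coeff n
  map_add' x y := by simp
  map_smul' c x := by simp [Polynomial.coeff_smul]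

lemma kap_apply (n : ℕ) (γ : P2) : kap n γ = (psi γ).coeff n := rfl

def EthL (l a : ℂ) : P2 →ₗ[ℂ] P2 :=
  -((LinearMap.mulLeft ℂ (Cc (1/(4*l)) * (hbar^2 + Cc a))).comp
    (MvPolynomial.aeval ![hh + Cc (-2 : ℂ), hbar] : P2 →ₐ[ℂ] P2).toLinearMap)

lemma EthL_apply (l a : ℂ) (γ : P2) :
    EthL l a γ = -(Cc (1/(4*l)) * (hbar ^ 2 + Cc a) * sh (-2) γ) := rfl

lemma key (l a : ℂ) (N : ℕ) :
    (kap (N+2)) ∘ₗ EthL l a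
      = (-(1/(4*l))) • (sigL ∘ₗ kap N) + (-(1/(4*l)*a)) • (sigL ∘ₗ kap (N+2)) := by
  apply LinearMap.ext
  intro γ
  simp only [LinearMap.comp_apply, LinearMap.add_apply, LinearMap.smul_apply, kap_apply,
    EthL_apply]
  rw [map_neg, map_mul, map_mul, psi_Cc, psi_sh, map_add, map_pow, psi_hbar, psi_Cc]
  rw [mul_assoc, Polynomial.coeff_neg, Polynomial.coeff_C_mul, add_mul, Polynomial.coeff_add,
    Polynomial.coeff_X_pow_mul, Polynomial.coeff_C_mul, Polynomial.coeff_map,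
    Polynomial.coeff_map]
  show -(Polynomial.C (1/(4*l)) * (sigA ((psi γ).coeff N)
      + Polynomial.C a * sigA ((psi γ).coeff (N+2))))
      = (-(1/(4*l))) • sigL ((psi γ).coeff N) + (-(1/(4*l)*a)) • sigL ((psi γ).coeff (N+2))
  rw [← Polynomial.smul_eq_C_mul, ← Polynomial.smul_eq_C_mul]
  show -((1/(4*l)) • (sigL ((psi γ).coeff N) + a • sigL ((psi γ).coeff (N+2)))) = _
  module

section TensorSide

variable {L : Type} [AddCommGroup L] [Module ℂ L]

def eqv (M : Type) [AddCommGroup M] [Module ℂ M] :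
    M ⊗[ℂ] L ≃ₗ[ℂ] ((Module.Basis.ofVectorSpaceIndex ℂ L) →₀ M) :=
  letI : DecidableEq (Module.Basis.ofVectorSpaceIndex ℂ L) := Classical.decEq _
  (TensorProduct.congr (LinearEquiv.refl ℂ M) (Module.Basis.ofVectorSpace ℂ L).repr).trans
    (TensorProduct.finsuppScalarRight ℂ ℂ M (Module.Basis.ofVectorSpaceIndex ℂ L))

lemma eqv_natural (f : P2 →ₗ[ℂ] R1) (w : P2 ⊗[ℂ] L) (i : Module.Basis.ofVectorSpaceIndex ℂ L) :
    eqv R1 (f.rTensor L w) i = f (eqv P2 w i) := by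
  induction w using TensorProduct.induction_on with
  | zero => simp
  | tmul γ u =>
      simp [eqv, LinearMap.rTensor_tmul, TensorProduct.congr_tmul,
        TensorProduct.finsuppScalarRight_apply_tmul_apply]
  | add x y hx hy => simp [map_add, Finsupp.add_apply, hx, hy]

lemma Kinj (u : P2 ⊗[ℂ] L) (hu : ∀ n : ℕ, (kap n).rTensor L u = 0) : u = 0 := by
  have h0 : eqv (L := L) P2 u = 0 := by
    apply Finsupp.ext; intro i
    have hpsi0 : psi (eqv P2 u i) = 0 := by
      apply Polynomial.ext; intro n
      have h := eqv_natural (kap n) u i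
      rw [hu n, map_zero, Finsupp.zero_apply] at h
      rw [Polynomial.coeff_zero, ← kap_apply]
      exact h.symm
    have h2 : psi (eqv P2 u i) = psi 0 := by rw [hpsi0, map_zero]
    rw [Finsupp.coe_zero, Pi.zero_apply]
    exact psi_inj h2
  have := congrArg (eqv (L := L) P2).symm h0
  simpa using this

lemma Kbound (u : P2 ⊗[ℂ] L) : ∃ M : ℕ, ∀ n : ℕ, M < n → (kap n).rTensor L u = 0 := by
  induction u using TensorProduct.induction_on with
  | zero => exact ⟨0, fun n _ => by simp⟩
  | tmul γ v =>
      refine ⟨(psi γ).natDegree, fun n hn => ?_⟩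
      rw [LinearMap.rTensor_tmul, kap_apply, Polynomial.coeff_eq_zero_of_natDegree_lt hn,
        TensorProduct.zero_tmul]
  | add x y hx hy =>
      obtain ⟨M1, h1⟩ := hx; obtain ⟨M2, h2⟩ := hy
      refine ⟨max M1 M2, fun n hn => ?_⟩
      rw [map_add, h1 n (lt_of_le_of_lt (le_max_left _ _) hn),
        h2 n (lt_of_le_of_lt (le_max_right _ _) hn), add_zero]

lemma sig_rTensor_inj : Function.Injective (sigL.rTensor L) := by
  have h : sigL' ∘ₗ sigL = LinearMap.id := LinearMap.ext fun x => sigA'_sigA x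
  have h2 : (sigL'.rTensor L) ∘ₗ (sigL.rTensor L) = LinearMap.id := by
    rw [← LinearMap.rTensor_comp, h, LinearMap.rTensor_id]
  intro x y hxy
  have := congrArg (sigL'.rTensor L) hxy
  rwa [← LinearMap.comp_apply, ← LinearMap.comp_apply, h2, LinearMap.id_apply,
    LinearMap.id_apply] at this

end TensorSide

variable {g : Type} [LieRing g] [LieAlgebra ℂ g]

lemma no_eigen (T : TakiffData g) (l a b : ℂ) (hl : l ≠ 0)
    [LieRingModule g P2] [LieModule ℂ g P2] (hTh : ThetaAct T l a b)
    {L : Type} [AddCommGroup L] [Module ℂ L] [LieRingModule g L] [LieModule ℂ g L]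
    (μ₂ : ℂ) (w : P2 ⊗[ℂ] L) (hw : w ≠ 0) : ⁅T.E', w⁆ ≠ μ₂ • w := by
  intro heig
  classical
  have hbr : ∀ u : P2 ⊗[ℂ] L,
      ⁅T.E', u⁆ = (EthL l a).rTensor L u + (LieModule.toEnd ℂ g L T.E').lTensor P2 u := by
    intro u
    induction u using TensorProduct.induction_on with
    | zero => simp
    | tmul γ v =>
        rw [TensorProduct.LieModule.lie_tmul_right, LinearMap.rTensor_tmul, LinearMap.lTensor_tmul,
          hTh.2.2.1 γ, EthL_apply, LieModule.toEnd_apply_apply]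
    | add x y hx hy => rw [lie_add, hx, hy, map_add, map_add]; abel
  obtain ⟨M, hM⟩ := Kbound w
  have hex : ∃ n : ℕ, (kap n).rTensor L w ≠ 0 := by
    by_contra hc; push_neg at hc; exact hw (Kinj w hc)
  obtain ⟨n₀, hn₀⟩ := hex
  set s : Finset ℕ := (Finset.range (M+1)).filter (fun n => (kap n).rTensor L w ≠ 0) with hs
  have hmem : ∀ n : ℕ, n ∈ s ↔ n ≤ M ∧ (kap n).rTensor L w ≠ 0 := by
    intro n; simp [hs, Nat.lt_succ_iff]
  have hn₀M : n₀ ≤ M := by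
    by_contra hc; exact hn₀ (hM n₀ (not_le.mp hc))
  have hsne : s.Nonempty := ⟨n₀, (hmem n₀).mpr ⟨hn₀M, hn₀⟩⟩
  set N := s.max' hsne with hN
  have hKN : (kap N).rTensor L w ≠ 0 := ((hmem N).mp (s.max'_mem hsne)).2
  have htop : ∀ n, N < n → (kap n).rTensor L w = 0 := by
    intro n hn
    by_contra hc
    have hnM : n ≤ M := by by_contra hc2; exact hc (hM n (not_le.mp hc2))
    exact absurd (s.le_max' n ((hmem n).mpr ⟨hnM, hc⟩)) (not_le.mpr hn)
  have heq := congrArg ((kap (N+2)).rTensor L) heig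
  rw [hbr w, map_add, map_smul] at heq
  have h2 : (kap (N+2)).rTensor L ((LieModule.toEnd ℂ g L T.E').lTensor P2 w) = 0 := by
    have hcomm : (kap (N+2)).rTensor L ∘ₗ (LieModule.toEnd ℂ g L T.E').lTensor P2
        = (LieModule.toEnd ℂ g L T.E').lTensor R1 ∘ₗ (kap (N+2)).rTensor L :=
      by rw [LinearMap.rTensor_comp_lTensor, LinearMap.lTensor_comp_rTensor]
    have := LinearMap.congr_fun hcomm w
    rw [LinearMap.comp_apply, LinearMap.comp_apply] at this
    rw [this, htop (N+2) (by omega), map_zero]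
  have h1 : (kap (N+2)).rTensor L ((EthL l a).rTensor L w)
      = (-(1/(4*l))) • (sigL.rTensor L) ((kap N).rTensor L w) := by
    have hc : ((kap (N+2)) ∘ₗ EthL l a).rTensor L
        = (-(1/(4*l))) • ((sigL.rTensor L) ∘ₗ (kap N).rTensor L)
          + (-(1/(4*l)*a)) • ((sigL.rTensor L) ∘ₗ (kap (N+2)).rTensor L) := by
      rw [key l a N, LinearMap.rTensor_add, LinearMap.rTensor_smul, LinearMap.rTensor_smul,
        LinearMap.rTensor_comp, LinearMap.rTensor_comp]
    have h3 := LinearMap.congr_fun hc w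
    rw [LinearMap.rTensor_comp] at h3
    simp only [LinearMap.comp_apply, LinearMap.add_apply, LinearMap.smul_apply] at h3
    rw [h3, htop (N+2) (by omega), map_zero, smul_zero, add_zero]
  rw [h1, h2, add_zero, htop (N+2) (by omega), smul_zero] at heq
  have hc1 : (-(1/(4*l)) : ℂ) ≠ 0 :=
    neg_ne_zero.mpr (one_div_ne_zero (mul_ne_zero (by norm_num) hl))
  have hz : (sigL.rTensor L) ((kap N).rTensor L w) = 0 := by
    rcases smul_eq_zero.mp heq with h | h
    · exact absurd h hc1
    · exact h
  exact hKN (sig_rTensor_inj (by rw [hz, map_zero]))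

end Tk

theorem stmt13 {g : Type} [LieRing g] [LieAlgebra ℂ g] (T : Tk.TakiffData g)
    (l a b η θ : ℂ) (hl : l ≠ 0) (hηθ : (η, θ) ≠ (0, 0))
    [LieRingModule g P2] [LieModule ℂ g P2]
    (hTh : Tk.ThetaAct T l a b)
    {L : Type} [AddCommGroup L] [Module ℂ L] [LieRingModule g L] [LieModule ℂ g L]
    (hLsimple : IsSimpleOrder (LieSubmodule ℂ g L))
    (v : L) (hv : Tk.IsHW T η θ v) :
    (∀ (μ1 μ2 : ℂ) (w : P2 ⊗[ℂ] L), w ≠ 0 →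
        ¬(⁅T.E, w⁆ = μ1 • w ∧ ⁅T.E', w⁆ = μ2 • w)) ∧
    (∀ (μ1 μ2 : ℂ) (W : Type) [AddCommGroup W] [Module ℂ W] [LieRingModule g W]
        [LieModule ℂ g W] (w : W), ⁅T.E, w⁆ = μ1 • w → ⁅T.E', w⁆ = μ2 • w →
          LieSubmodule.lieSpan ℂ g {w} = ⊤ → Nontrivial W →
            IsEmpty ((P2 ⊗[ℂ] L) ≃ₗ⁅ℂ,g⁆ W)) := by
  
  constructor
  · intro μ1 μ2 w hw hconj
    exact Tk.no_eigen T l a b hl hTh μ2 w hw hconj.2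
  · intro μ1 μ2 W _ _ _ _ w hE hE' hspan hW
    constructor
    intro e
    have hw0 : w ≠ 0 := by
      intro h0
      rw [h0] at hspan
      have hbotle : LieSubmodule.lieSpan ℂ g ({0} : Set W) ≤ ⊥ :=
        LieSubmodule.lieSpan_le.mpr (by simp)
      rw [hspan] at hbotle
      obtain ⟨x, hx⟩ := exists_ne (0 : W)
      exact hx ((LieSubmodule.mem_bot x).mp (hbotle trivial))
    have hw' : e.symm w ≠ 0 := by
      intro h
      apply hw0
      have h2 : (e.symm : W ≃ₗ[ℂ] P2 ⊗[ℂ] L) w = 0 := by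
        rw [LieModuleEquiv.coe_toLinearEquiv]; exact h
      exact ((e.symm : W ≃ₗ[ℂ] P2 ⊗[ℂ] L).map_eq_zero_iff).mp h2
    have hlie : ⁅T.E', e.symm w⁆ = μ2 • e.symm w := by
      have h1 : e.symm ⁅T.E', w⁆ = ⁅T.E', e.symm w⁆ := LieModuleHom.map_lie _ _ _
      have h2 : e.symm (μ2 • w) = μ2 • e.symm w := by
        have h3 := ((e.symm : W →ₗ⁅ℂ,g⁆ P2 ⊗[ℂ] L)).map_smul μ2 w
        exact h3
      rw [← h1, hE', h2]
    exact Tk.no_eigen T l a b hl hTh μ2 (e.symm w) hw' hlie
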